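/- arXiv:1703.10136 — 2 statements merged into one kernel-verified Lean document; each statement's English description precedes it below -/
import Mathlib

section
/- Let A be an exchangeable random n×n real matrix and t a natural number. Define the random n×n squared diffusion-distance matrix S_t by S_t(i,j) = (L(A)^{2t})(i,i) + (L(A)^{2t})(j,j) − 2(L(A)^{2t})(i,j), where L(A) is the normalized graph Laplacian of A. Then S_t is exchangeable: for every permutation σ of {1,…,n}, the random matrix S_t^σ with entries S_t^σ(i,j) = S_t(σ(i),σ(j)) has the same distribution as S_t. -/
open scoped BigOperators
open MeasureTheory

/-- The normalized graph Laplacian of an `n × n` real matrix `K`: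
`L(K)(i,j) = K(i,j) / √(rᵢ · cⱼ)` where `rᵢ` is the `i`-th row sum and `cⱼ` the `j`-th
column sum, with the convention that the entry is `0` whenever `rᵢ = 0` or `cⱼ = 0`. -/
noncomputable def normLap {n : ℕ} (K : Matrix (Fin n) (Fin n) ℝ) :
    Matrix (Fin n) (Fin n) ℝ :=
  Matrix.of fun i j =>
    if (∑ l, K i l) = 0 ∨ (∑ l, K l j) = 0 then 0
    else K i j / Real.sqrt ((∑ l, K i l) * (∑ l, K l j))

/-- A random `n × n` real matrix `A` on a probability space `(Ω, P)` is exchangeable if for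
every permutation `σ` of `{1,…,n}` the relabeled random matrix `A^σ(ω)(i,j) = A(ω)(σ(i),σ(j))`
has the same distribution (pushforward of `P`) as `A`. -/
def Exchangeable {Ω : Type*} [MeasurableSpace Ω] {n : ℕ} (P : Measure Ω)
    (A : Ω → Fin n → Fin n → ℝ) : Prop :=
  ∀ σ : Equiv.Perm (Fin n),
    P.map (fun ω => fun i j => A ω (σ i) (σ j)) = P.map A

/-! The diffusion-distance matrix is a measurable function of `A` that commutes with relabelling
the indices: a permutation only reorders the row and column sums defining the normalized
Laplacian, and matrix powers commute with conjugation by a permutation matrix. The relabelled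
law of such an equivariant image of `A` is then the pushforward of the relabelled law of `A`. -/

theorem Matrix.submatrix_pow_equiv {ι κ R : Type*} [Fintype ι] [DecidableEq ι] [Fintype κ]
    [DecidableEq κ] [Semiring R] (M : Matrix ι ι R) (e : κ ≃ ι) (k : ℕ) :
    (M ^ k).submatrix e e = M.submatrix e e ^ k :=
  map_pow (Matrix.reindexRingEquiv R e.symm) M k

namespace Exchangeable

variable {Ω : Type*} [MeasurableSpace Ω] {n : ℕ} {P : Measure Ω}

theorem comp {A : Ω → Fin n → Fin n → ℝ} (hA : Measurable A) (hexch : Exchangeable P A)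
    {F : (Fin n → Fin n → ℝ) → Fin n → Fin n → ℝ} (hF : Measurable F)
    (hequiv : ∀ (σ : Equiv.Perm (Fin n)) K,
      F (fun i j => K (σ i) (σ j)) = fun i j => F K (σ i) (σ j)) :
    Exchangeable P (F ∘ A) := by
  intro σ
  have hAσ : Measurable fun ω i j => A ω (σ i) (σ j) :=
    measurable_pi_lambda _ fun i => measurable_pi_lambda _ fun j =>
      (measurable_pi_apply (σ j)).comp ((measurable_pi_apply (σ i)).comp hA)
  calc P.map (fun ω i j => F (A ω) (σ i) (σ j))
      = P.map (F ∘ fun ω i j => A ω (σ i) (σ j)) := by simp only [Function.comp_def, hequiv]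
    _ = (P.map A).map F := by rw [← Measure.map_map hF hAσ, hexch σ]
    _ = P.map (F ∘ A) := Measure.map_map hF hA

end Exchangeable

theorem normLap_submatrix {n : ℕ} (K : Matrix (Fin n) (Fin n) ℝ) (σ : Equiv.Perm (Fin n)) :
    normLap (K.submatrix σ σ) = (normLap K).submatrix σ σ := by
  ext i j
  have hrow : ∑ l, K (σ i) (σ l) = ∑ l, K (σ i) l := Equiv.sum_comp σ (K (σ i))
  have hcol : ∑ l, K (σ l) (σ j) = ∑ l, K l (σ j) := Equiv.sum_comp σ (K · (σ j))
  simp [normLap, hrow, hcol]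

theorem measurable_normLap {n : ℕ} :
    Measurable fun (K : Fin n → Fin n → ℝ) i j => normLap (Matrix.of K) i j := by
  have hentry (i j : Fin n) : Measurable fun K : Fin n → Fin n → ℝ => K i j :=
    (measurable_pi_apply j).comp (measurable_pi_apply i)
  refine measurable_pi_lambda _ fun i => measurable_pi_lambda _ fun j => ?_
  have hrow : Measurable fun K : Fin n → Fin n → ℝ => ∑ l, K i l :=
    Finset.measurable_sum _ fun l _ => hentry i l
  have hcol : Measurable fun K : Fin n → Fin n → ℝ => ∑ l, K l j :=
    Finset.measurable_sum _ fun l _ => hentry l j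
  exact Measurable.ite
    ((hrow (measurableSet_singleton 0)).union (hcol (measurableSet_singleton 0)))
    measurable_const ((hentry i j).div (Real.continuous_sqrt.measurable.comp (hrow.mul hcol)))

/-- For `M = L ^ (2 * t)` this is the matrix of squared diffusion distances at time `t`. -/
def sqDistMatrix {ι : Type*} (M : Matrix ι ι ℝ) : Matrix ι ι ℝ :=
  Matrix.of fun i j => M i i + M j j - 2 * M i j

theorem sqDistMatrix_submatrix {ι κ : Type*} (M : Matrix ι ι ℝ) (e : κ → ι) :
    sqDistMatrix (M.submatrix e e) = (sqDistMatrix M).submatrix e e :=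
  rfl

theorem continuous_sqDistMatrix_pow {ι : Type*} [Fintype ι] [DecidableEq ι] (k : ℕ) :
    Continuous fun (M : ι → ι → ℝ) i j => sqDistMatrix (Matrix.of M ^ k) i j := by
  simp only [sqDistMatrix, Matrix.of_apply]
  fun_prop

theorem exchangeable_sq_diffusion_distance_general {Ω : Type*} [MeasurableSpace Ω] {n : ℕ}
    (P : Measure Ω)
    (A : Ω → Fin n → Fin n → ℝ) (hA : Measurable A)
    (hexch : Exchangeable P A) (t : ℕ)
    (S : Ω → Fin n → Fin n → ℝ)
    (hS : ∀ ω i j, S ω i j =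
      (normLap (Matrix.of (A ω)) ^ (2 * t)) i i
        + (normLap (Matrix.of (A ω)) ^ (2 * t)) j j
        - 2 * (normLap (Matrix.of (A ω)) ^ (2 * t)) i j) :
    Exchangeable P S := by
  have hSA : S = (fun K => sqDistMatrix (normLap (Matrix.of K) ^ (2 * t))) ∘ A := by
    funext ω i j
    exact hS ω i j
  rw [hSA]
  refine hexch.comp hA ?_ fun σ K => ?_
  · exact (continuous_sqDistMatrix_pow (2 * t)).measurable.comp measurable_normLap
  · change sqDistMatrix (normLap ((Matrix.of K).submatrix σ σ) ^ (2 * t))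
      = (sqDistMatrix (normLap (Matrix.of K) ^ (2 * t))).submatrix σ σ
    rw [normLap_submatrix, ← Matrix.submatrix_pow_equiv, sqDistMatrix_submatrix]

/-- Let `A` be an exchangeable random `n × n` real matrix and `t` a natural number.  The
random squared diffusion-distance matrix
`Sₜ(i,j) = (L(A)^{2t})(i,i) + (L(A)^{2t})(j,j) − 2 (L(A)^{2t})(i,j)`,
where `L(A)` is the normalized graph Laplacian of `A`, is exchangeable. -/
theorem exchangeable_sq_diffusion_distance {Ω : Type*} [MeasurableSpace Ω] {n : ℕ}
    (P : Measure Ω) [IsProbabilityMeasure P]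
    (A : Ω → Fin n → Fin n → ℝ) (hA : Measurable A)
    (hexch : Exchangeable P A) (t : ℕ)
    (S : Ω → Fin n → Fin n → ℝ)
    (hS : ∀ ω i j, S ω i j =
      (normLap (Matrix.of (A ω)) ^ (2 * t)) i i
        + (normLap (Matrix.of (A ω)) ^ (2 * t)) j j
        - 2 * (normLap (Matrix.of (A ω)) ^ (2 * t)) i j) :
    Exchangeable P S :=
  exchangeable_sq_diffusion_distance_general P A hA hexch t S hS
end

section
/- For any points U_1,…,U_n ∈ ℝ^q and X_1,…,X_n ∈ ℝ^p, the sample distance covariance is nonnegative: dcov_n(U,X) = (1/n²) Σ_{i,j=1}^n C̃(i,j) D̃(i,j) ≥ 0. -/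
/-!
Since the columns of `H` sum to zero, `-HCH` and `-HDH` are positive semidefinite as soon as the
Euclidean distance is conditionally negative semidefinite, i.e. `∑ᵢⱼ vᵢ vⱼ ‖xᵢ - xⱼ‖ ≤ 0` whenever
`∑ᵢ vᵢ = 0`; the entrywise pairing of two positive semidefinite matrices is then nonnegative by the
Schur product theorem.

For the conditional negativity, write `‖y‖ = I⁻¹ ∫₀^∞ (1 - e^{-s‖y‖²}) s^{-3/2} ds` with `I > 0`
(substitute `s ↦ s / ‖y‖²`). When `∑ᵢ vᵢ = 0` the constant `1` drops out of the quadratic form, and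
what is left is minus the quadratic form of the Gaussian kernel `e^{-s‖xᵢ - xⱼ‖²}`. That kernel is
positive semidefinite: it is the Hadamard product of a rank-one matrix with the entrywise
exponential of the Gram matrix `2s⟨xᵢ, xⱼ⟩`, and entrywise exponentials of positive semidefinite
matrices are positive semidefinite because their Taylor coefficients are Hadamard powers.
-/

open scoped BigOperators

/-- The sample distance covariance of `U₁,…,Uₙ ∈ ℝ^q` and `X₁,…,Xₙ ∈ ℝ^p`:
with Euclidean distance matrices `C(i,j) = ‖Uᵢ − Uⱼ‖`, `D(i,j) = ‖Xᵢ − Xⱼ‖`, the centering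
matrix `H = I − (1/n)J`, and `C̃ = HCH`, `D̃ = HDH`, it is
`dcovₙ(U,X) = (1/n²) Σᵢⱼ C̃(i,j) D̃(i,j)`. -/
noncomputable def dcov {q p n : ℕ} (U : Fin n → EuclideanSpace ℝ (Fin q))
    (X : Fin n → EuclideanSpace ℝ (Fin p)) : ℝ :=
  let C : Matrix (Fin n) (Fin n) ℝ := Matrix.of fun i j => ‖U i - U j‖
  let D : Matrix (Fin n) (Fin n) ℝ := Matrix.of fun i j => ‖X i - X j‖
  let H : Matrix (Fin n) (Fin n) ℝ := 1 - (n : ℝ)⁻¹ • Matrix.of (fun _ _ => (1 : ℝ))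
  ((n : ℝ) ^ 2)⁻¹ * ∑ i, ∑ j, (H * C * H) i j * (H * D * H) i j

open Matrix Real MeasureTheory Set
open scoped ComplexOrder

namespace Matrix

variable {ι κ : Type*} [Fintype ι]

theorem PosSemidef.map_pow {𝕜 : Type*} [RCLike 𝕜] {A : Matrix ι ι 𝕜} (hA : A.PosSemidef) :
    ∀ k : ℕ, (A.map (· ^ k)).PosSemidef
  | 0 => by
    convert posSemidef_vecMulVec_self_star (1 : ι → 𝕜) using 1
    ext
    simp [vecMulVec]
  | k + 1 => by
    convert (hA.map_pow k).hadamard hA using 1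
    ext
    simp [pow_succ]

theorem PosSemidef.map_exp {A : Matrix ι ι ℝ} (hA : A.PosSemidef) :
    (A.map Real.exp).PosSemidef := by
  refine posSemidef_iff_dotProduct_mulVec.mpr
    ⟨hA.isHermitian.map _ fun _ ↦ by simp, fun v ↦ ?_⟩
  have hsum : HasSum (fun k : ℕ ↦ (k.factorial : ℝ)⁻¹ * (star v ⬝ᵥ A.map (· ^ k) *ᵥ v))
      (star v ⬝ᵥ A.map Real.exp *ᵥ v) := by
    simp only [dotProduct, mulVec, map_apply, Finset.mul_sum]
    refine hasSum_sum fun i _ ↦ hasSum_sum fun j _ ↦ ?_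
    have hexp := (NormedSpace.expSeries_div_hasSum_exp (A i j)).mul_left (star v i * v j)
    rw [← Real.exp_eq_exp_ℝ] at hexp
    have hterm : ∀ k : ℕ, (k.factorial : ℝ)⁻¹ * (star v i * (A i j ^ k * v j))
        = star v i * v j * (A i j ^ k / k.factorial) := fun k ↦ by ring
    rw [show star v i * (Real.exp (A i j) * v j) = star v i * v j * Real.exp (A i j) by ring]
    simpa only [hterm] using hexp
  exact hsum.nonneg fun k ↦ mul_nonneg (by positivity) ((hA.map_pow k).dotProduct_mulVec_nonneg v)

theorem PosSemidef.sum_apply_mul_apply_nonneg {A B : Matrix ι ι ℝ} (hA : A.PosSemidef)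
    (hB : B.PosSemidef) : 0 ≤ ∑ i, ∑ j, A i j * B i j := by
  simpa only [dotProduct, mulVec, hadamard_apply, Pi.star_apply, star_trivial, Pi.one_apply,
    one_mul, mul_one] using (hA.hadamard hB).dotProduct_mulVec_nonneg (1 : ι → ℝ)

def IsCondNegSemidef (C : Matrix ι ι ℝ) : Prop :=
  ∀ v : ι → ℝ, ∑ i, v i = 0 → v ⬝ᵥ C *ᵥ v ≤ 0

theorem IsCondNegSemidef.posSemidef_neg_transpose_mul_mul [Fintype κ] {C : Matrix ι ι ℝ}
    (hC : C.IsCondNegSemidef) (hCsymm : C.IsSymm) {H : Matrix ι κ ℝ}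
    (hH : ∀ j, ∑ i, H i j = 0) : (-(Hᵀ * C * H)).PosSemidef := by
  refine posSemidef_iff_dotProduct_mulVec.mpr ⟨?_, fun v ↦ ?_⟩
  · simp [IsHermitian, conjTranspose_eq_transpose_of_trivial, Matrix.mul_assoc, hCsymm.eq]
  · have hHv : ∑ i, (H *ᵥ v) i = 0 := by
      simp only [mulVec, dotProduct]
      rw [Finset.sum_comm]
      simp [← Finset.sum_mul, hH]
    have hneg := hC _ hHv
    rw [star_trivial, neg_mulVec, dotProduct_neg, ← mulVec_mulVec, ← mulVec_mulVec,
      dotProduct_mulVec, vecMul_transpose]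
    linarith

theorem sum_one_sub_inv_card_smul_apply [DecidableEq ι] (j : ι) :
    ∑ i, (1 - (Fintype.card ι : ℝ)⁻¹ • of fun _ _ ↦ (1 : ℝ) : Matrix ι ι ℝ) i j = 0 := by
  have hcard : (Fintype.card ι : ℝ) ≠ 0 := Nat.cast_ne_zero.mpr (Fintype.card_pos_iff.mpr ⟨j⟩).ne'
  simp [one_apply, Finset.sum_sub_distrib, hcard]

end Matrix

theorem integrableOn_one_sub_exp_neg_mul_rpow :
    IntegrableOn (fun s : ℝ ↦ (1 - exp (-s)) * s ^ (-(3 / 2) : ℝ)) (Ioi 0) := by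
  have hmeas : Measurable fun s : ℝ ↦ (1 - exp (-s)) * s ^ (-(3 / 2) : ℝ) := by fun_prop
  have hnonneg : ∀ s : ℝ, 0 ≤ s → 0 ≤ (1 - exp (-s)) * s ^ (-(3 / 2) : ℝ) := fun s hs ↦
    mul_nonneg (by simpa using exp_le_one_iff.mpr (neg_nonpos.mpr hs)) (rpow_nonneg hs _)
  have hnear : IntegrableOn (fun s : ℝ ↦ (1 - exp (-s)) * s ^ (-(3 / 2) : ℝ)) (Ioc 0 1) := by
    have hbound : IntegrableOn (fun s : ℝ ↦ s ^ (-(1 / 2) : ℝ)) (Ioc 0 1) := by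
      rw [integrableOn_Ioc_iff_integrableOn_Ioo]
      exact (intervalIntegral.integrableOn_Ioo_rpow_iff one_pos).mpr (by norm_num)
    refine hbound.mono' hmeas.aestronglyMeasurable <| (ae_restrict_iff' measurableSet_Ioc).mpr <|
      .of_forall fun s hs ↦ ?_
    rw [Real.norm_of_nonneg (hnonneg s hs.1.le)]
    calc (1 - exp (-s)) * s ^ (-(3 / 2) : ℝ) ≤ s * s ^ (-(3 / 2) : ℝ) :=
          mul_le_mul_of_nonneg_right (by linarith [add_one_le_exp (-s)]) (rpow_nonneg hs.1.le _)
      _ = s ^ (-(1 / 2) : ℝ) := by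
          rw [← rpow_one_add' hs.1.le (by norm_num)]
          norm_num
  have hfar : IntegrableOn (fun s : ℝ ↦ (1 - exp (-s)) * s ^ (-(3 / 2) : ℝ)) (Ioi 1) := by
    refine (integrableOn_Ioi_rpow_of_lt (a := -(3 / 2)) (by norm_num) one_pos).mono'
      hmeas.aestronglyMeasurable <|
      (ae_restrict_iff' measurableSet_Ioi).mpr <| .of_forall fun s (hs : 1 < s) ↦ ?_
    rw [Real.norm_of_nonneg (hnonneg s (by linarith))]
    exact mul_le_of_le_one_left (rpow_nonneg (by linarith) _) (by linarith [exp_pos (-s)])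
  simpa [Ioc_union_Ioi_eq_Ioi zero_le_one] using hnear.union hfar

theorem integral_one_sub_exp_neg_mul_rpow_pos :
    0 < ∫ s in Ioi (0 : ℝ), (1 - exp (-s)) * s ^ (-(3 / 2) : ℝ) := by
  have hpos : ∀ s ∈ Ioi (0 : ℝ), 0 < (1 - exp (-s)) * s ^ (-(3 / 2) : ℝ) := fun s (hs : 0 < s) ↦
    mul_pos (by linarith [exp_lt_one_iff.mpr (neg_lt_zero.mpr hs)]) (rpow_pos_of_pos hs _)
  refine (setIntegral_pos_iff_support_of_nonneg_ae ((ae_restrict_iff' measurableSet_Ioi).mpr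
    (.of_forall fun s hs ↦ (hpos s hs).le)) integrableOn_one_sub_exp_neg_mul_rpow).mpr ?_
  rw [inter_eq_right.mpr fun s hs ↦ Function.mem_support.mpr (hpos s hs).ne']
  simp

theorem one_sub_exp_neg_const_mul_rpow_eq {c s : ℝ} (hc : 0 < c) (hs : 0 ≤ s) :
    (1 - exp (-(c * s))) * s ^ (-(3 / 2) : ℝ)
      = c ^ (3 / 2 : ℝ) * ((1 - exp (-(c * s))) * (c * s) ^ (-(3 / 2) : ℝ)) := by
  rw [mul_rpow hc.le hs, rpow_neg hc.le, mul_left_comm, ← mul_assoc (c ^ _),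
    mul_inv_cancel₀ (rpow_pos_of_pos hc _).ne', one_mul]

theorem integrableOn_one_sub_exp_neg_const_mul_rpow {c : ℝ} (hc : 0 ≤ c) :
    IntegrableOn (fun s : ℝ ↦ (1 - exp (-(c * s))) * s ^ (-(3 / 2) : ℝ)) (Ioi 0) := by
  obtain rfl | hc := hc.eq_or_lt
  · simp
  have hscaled : IntegrableOn
      (fun s : ℝ ↦ c ^ (3 / 2 : ℝ) * ((1 - exp (-(c * s))) * (c * s) ^ (-(3 / 2) : ℝ))) (Ioi 0) :=
    ((integrableOn_Ioi_comp_mul_left_iff (fun t ↦ (1 - exp (-t)) * t ^ (-(3 / 2) : ℝ)) 0 hc).mpr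
      (by simpa using integrableOn_one_sub_exp_neg_mul_rpow)).const_mul _
  exact hscaled.congr_fun (fun s hs ↦ (one_sub_exp_neg_const_mul_rpow_eq hc (le_of_lt hs)).symm)
    measurableSet_Ioi

theorem integral_one_sub_exp_neg_const_mul_rpow {c : ℝ} (hc : 0 ≤ c) :
    ∫ s in Ioi (0 : ℝ), (1 - exp (-(c * s))) * s ^ (-(3 / 2) : ℝ)
      = √c * ∫ s in Ioi (0 : ℝ), (1 - exp (-s)) * s ^ (-(3 / 2) : ℝ) := by
  obtain rfl | hc := hc.eq_or_lt
  · simp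
  rw [setIntegral_congr_fun measurableSet_Ioi
      fun s hs ↦ one_sub_exp_neg_const_mul_rpow_eq hc (le_of_lt hs),
    integral_const_mul,
    integral_comp_mul_left_Ioi (fun t ↦ (1 - exp (-t)) * t ^ (-(3 / 2) : ℝ)) 0 hc,
    mul_zero, smul_eq_mul, ← mul_assoc, ← rpow_neg_one, ← rpow_add hc, sqrt_eq_rpow]
  norm_num

section

variable {ι E : Type*} [Fintype ι] [SeminormedAddCommGroup E] [InnerProductSpace ℝ E]

theorem posSemidef_exp_neg_mul_norm_sub_sq (x : ι → E) {s : ℝ} (hs : 0 ≤ s) :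
    (of fun i j ↦ exp (-(s * ‖x i - x j‖ ^ 2))).PosSemidef := by
  have hrank := posSemidef_vecMulVec_self_star fun i ↦ exp (-(s * ‖x i‖ ^ 2))
  have hgram := ((posSemidef_gram ℝ x).smul (mul_nonneg zero_le_two hs)).map_exp
  have hsplit : (of fun i j ↦ exp (-(s * ‖x i - x j‖ ^ 2)))
      = vecMulVec (fun i ↦ exp (-(s * ‖x i‖ ^ 2))) (star fun i ↦ exp (-(s * ‖x i‖ ^ 2)))
        ⊙ ((2 * s) • gram ℝ x).map exp := by
    ext i j
    simp only [of_apply, hadamard_apply, vecMulVec_apply, map_apply, Matrix.smul_apply, gram_apply,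
      star_trivial, smul_eq_mul, ← exp_add, norm_sub_sq_real]
    ring_nf
  rw [hsplit]
  exact hrank.hadamard hgram

theorem isCondNegSemidef_norm_sub (x : ι → E) : (of fun i j ↦ ‖x i - x j‖).IsCondNegSemidef := by
  intro v hv
  have hgauss : ∀ s ∈ Ioi (0 : ℝ),
      ∑ i, ∑ j, v i * v j * ((1 - exp (-(‖x i - x j‖ ^ 2 * s))) * s ^ (-(3 / 2) : ℝ)) ≤ 0 := by
    intro s (hs : 0 < s)
    have hpsd := (posSemidef_exp_neg_mul_norm_sub_sq x hs.le).dotProduct_mulVec_nonneg v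
    have hexpand : ∑ i, ∑ j, v i * v j * ((1 - exp (-(‖x i - x j‖ ^ 2 * s))) * s ^ (-(3 / 2) : ℝ))
        = s ^ (-(3 / 2) : ℝ) * ((∑ i, v i) * (∑ j, v j)
          - star v ⬝ᵥ (of fun i j ↦ exp (-(s * ‖x i - x j‖ ^ 2))) *ᵥ v) := by
      rw [Finset.sum_mul_sum]
      simp only [dotProduct, mulVec, of_apply, star_trivial, Finset.mul_sum,
        ← Finset.sum_sub_distrib]
      refine Finset.sum_congr rfl fun i _ ↦ Finset.sum_congr rfl fun j _ ↦ ?_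
      ring_nf
    rw [hexpand, hv, zero_mul, zero_sub]
    exact mul_nonpos_of_nonneg_of_nonpos (rpow_nonneg hs.le _) (neg_nonpos.mpr hpsd)
  have hrepr : (v ⬝ᵥ (of fun i j ↦ ‖x i - x j‖) *ᵥ v)
        * ∫ s in Ioi (0 : ℝ), (1 - exp (-s)) * s ^ (-(3 / 2) : ℝ)
      = ∫ s in Ioi (0 : ℝ),
          ∑ i, ∑ j, v i * v j * ((1 - exp (-(‖x i - x j‖ ^ 2 * s))) * s ^ (-(3 / 2) : ℝ)) := by
    have hint : ∀ i j, IntegrableOn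
        (fun s ↦ v i * v j * ((1 - exp (-(‖x i - x j‖ ^ 2 * s))) * s ^ (-(3 / 2) : ℝ))) (Ioi 0) :=
      fun i j ↦ (integrableOn_one_sub_exp_neg_const_mul_rpow (sq_nonneg _)).const_mul _
    rw [integral_finsetSum _ fun i _ ↦ integrable_finsetSum _ fun j _ ↦ hint i j]
    simp only [dotProduct, mulVec, of_apply, Finset.sum_mul, Finset.mul_sum]
    refine Finset.sum_congr rfl fun i _ ↦ ?_
    rw [integral_finsetSum _ fun j _ ↦ hint i j]
    refine Finset.sum_congr rfl fun j _ ↦ ?_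
    rw [integral_const_mul, integral_one_sub_exp_neg_const_mul_rpow (sq_nonneg _),
      sqrt_sq (norm_nonneg _)]
    ring
  exact nonpos_of_mul_nonpos_left (hrepr ▸ setIntegral_nonpos measurableSet_Ioi hgauss)
    integral_one_sub_exp_neg_mul_rpow_pos

end

/-- For any points `U₁,…,Uₙ ∈ ℝ^q` and `X₁,…,Xₙ ∈ ℝ^p`, the sample distance covariance is
nonnegative: `dcovₙ(U,X) = (1/n²) Σᵢⱼ C̃(i,j) D̃(i,j) ≥ 0`. -/
theorem dcov_nonneg {q p n : ℕ} (U : Fin n → EuclideanSpace ℝ (Fin q))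
    (X : Fin n → EuclideanSpace ℝ (Fin p)) :
    0 ≤ dcov U X := by
  set H : Matrix (Fin n) (Fin n) ℝ := 1 - (n : ℝ)⁻¹ • of fun _ _ ↦ 1
  have hHt : Hᵀ = H := by
    ext i j
    simp [H, one_apply, eq_comm]
  have hcol : ∀ j, ∑ i, H i j = 0 := fun j ↦ by
    simpa only [Fintype.card_fin] using sum_one_sub_inv_card_smul_apply j
  have hcenter : ∀ {r : ℕ} (x : Fin n → EuclideanSpace ℝ (Fin r)),
      (-(H * (of fun i j ↦ ‖x i - x j‖) * H)).PosSemidef := fun x ↦ by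
    simpa [hHt] using (isCondNegSemidef_norm_sub x).posSemidef_neg_transpose_mul_mul
      (by ext; simp [norm_sub_rev]) hcol
  have hpair := (hcenter U).sum_apply_mul_apply_nonneg (hcenter X)
  simp only [Matrix.neg_apply, neg_mul_neg] at hpair
  exact mul_nonneg (by positivity) hpair
end
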